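/- arXiv:1902.00904 — 2 statements merged into one kernel-verified Lean document; each statement's English description precedes it below -/
import Mathlib

section
/- Let p > 1, q = p/(p-1), and define the generalized Gaussian G̃_p(x) = (C_{p,n} e^{-((p-1)/p^q)|x|^q})^{1/(p-1)} on ℝⁿ, where C_{p,n} = (p^{1/p} q^{1/q})^{-n} π^{-n/2} Γ(n/2+1)/Γ(n/q+1). Then ∫_{ℝⁿ} G̃_p(x)^{p-1} dx = 1. -/
open MeasureTheory

/-- Normalizing constant of the generalized Gaussian. -/
noncomputable def Cpn (n : ℕ) (p q : ℝ) : ℝ :=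
  (p ^ (1 / p) * q ^ (1 / q)) ^ (-(n : ℝ)) * Real.pi ^ (-(n : ℝ) / 2) *
    (Real.Gamma ((n : ℝ) / 2 + 1) / Real.Gamma ((n : ℝ) / q + 1))

/-- The generalized Gaussian profile of the fundamental solution of the p-heat equation. -/
noncomputable def Gp (n : ℕ) (p q : ℝ) (x : EuclideanSpace ℝ (Fin n)) : ℝ :=
  (Cpn n p q * Real.exp (-((p - 1) / p ^ q) * ‖x‖ ^ q)) ^ (1 / (p - 1))

theorem integral_Gp_pow_eq_one (n : ℕ) (hn : 1 ≤ n) (p q : ℝ) (hp : 1 < p)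
    (hq : q = p / (p - 1)) :
    ∫ x, Gp n p q x ^ (p - 1) = 1 := by
  have hp0 : 0 < p := lt_trans one_pos hp
  have hp1 : 0 < p - 1 := by linarith
  have hq1 : 1 < q := by
    rw [hq, lt_div_iff₀ hp1]; linarith
  have hq0 : 0 < q := lt_trans one_pos hq1
  have hqe : q * (p - 1) = p := by
    rw [hq]; field_simp
  set b : ℝ := (p - 1) / p ^ q with hb
  have hb0 : 0 < b := div_pos hp1 (Real.rpow_pos_of_pos hp0 q)
  have hG2 : 0 < Real.Gamma ((n : ℝ) / 2 + 1) := Real.Gamma_pos_of_pos (by positivity)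
  have hGq : 0 < Real.Gamma ((n : ℝ) / q + 1) := Real.Gamma_pos_of_pos (by positivity)
  have hA : (0 : ℝ) < p ^ (1 / p) * q ^ (1 / q) :=
    mul_pos (Real.rpow_pos_of_pos hp0 _) (Real.rpow_pos_of_pos hq0 _)
  have hC : 0 < Cpn n p q := by
    unfold Cpn
    exact mul_pos (mul_pos (Real.rpow_pos_of_pos hA _) (Real.rpow_pos_of_pos Real.pi_pos _))
      (div_pos hG2 hGq)
  -- pointwise simplification
  have hpt : ∀ x : EuclideanSpace ℝ (Fin n),
      Gp n p q x ^ (p - 1) = Cpn n p q * Real.exp (-b * ‖x‖ ^ q) := by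
    intro x
    unfold Gp
    rw [← Real.rpow_mul (le_of_lt (mul_pos hC (Real.exp_pos _))), one_div,
      inv_mul_cancel₀ (ne_of_gt hp1), Real.rpow_one]
  simp_rw [hpt]
  rw [integral_const_mul]
  -- compute the base integral
  have hI0 : (∫ x : EuclideanSpace ℝ (Fin n), Real.exp (-‖x‖ ^ q))
      = Real.sqrt Real.pi ^ n * Real.Gamma ((n : ℝ) / q + 1) / Real.Gamma ((n : ℝ) / 2 + 1) := by
    have h1 := MeasureTheory.measure_unitBall_eq_integral_div_gamma
      (volume : Measure (EuclideanSpace ℝ (Fin n))) hq0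
    haveI : Nonempty (Fin n) := Fin.pos_iff_nonempty.mp (by omega)
    have h2 := EuclideanSpace.volume_ball (Fin n) (0 : EuclideanSpace ℝ (Fin n)) 1
    rw [h1, finrank_euclideanSpace_fin, Fintype.card_fin] at h2
    simp only [ENNReal.ofReal_one, one_pow, one_mul] at h2
    have hnn : 0 ≤ ∫ x : EuclideanSpace ℝ (Fin n), Real.exp (-‖x‖ ^ q) :=
      integral_nonneg fun x => (Real.exp_pos _).le
    have h3 : (∫ x : EuclideanSpace ℝ (Fin n), Real.exp (-‖x‖ ^ q)) /
        Real.Gamma ((n : ℝ) / q + 1) = Real.sqrt Real.pi ^ n / Real.Gamma ((n : ℝ) / 2 + 1) := by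
      refine (ENNReal.ofReal_eq_ofReal_iff ?_ ?_).mp h2 <;> positivity
    field_simp at h3 ⊢
    linarith [h3]
  -- scaling
  set c : ℝ := b ^ (1 / q) with hc
  have hc0 : 0 < c := Real.rpow_pos_of_pos hb0 _
  have hsc : ∀ x : EuclideanSpace ℝ (Fin n),
      Real.exp (-b * ‖x‖ ^ q) = Real.exp (-‖c • x‖ ^ q) := by
    intro x
    congr 1
    rw [norm_smul, Real.norm_eq_abs, abs_of_pos hc0,
      Real.mul_rpow hc0.le (norm_nonneg x), hc, ← Real.rpow_mul hb0.le, one_div,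
      inv_mul_cancel₀ (ne_of_gt hq0), Real.rpow_one]
    ring
  simp_rw [hsc]
  rw [MeasureTheory.Measure.integral_comp_smul volume
    (fun y : EuclideanSpace ℝ (Fin n) => Real.exp (-‖y‖ ^ q)) c,
    finrank_euclideanSpace_fin, smul_eq_mul, hI0]
  -- identify the scaling constant
  have hp1q : p - 1 = p / q := by
    field_simp
    linarith [hqe]
  have hpq : (1 - q) * (1 / q) = -(1 / p) := by
    field_simp
    nlinarith [hqe]
  have hcA : c = (p ^ (1 / p) * q ^ (1 / q))⁻¹ := by
    have h1 : b = p ^ (1 - q) / q := by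
      rw [hb, hp1q, Real.rpow_sub hp0, Real.rpow_one]
      ring
    rw [hc, h1, Real.div_rpow (Real.rpow_nonneg hp0.le _) hq0.le,
      ← Real.rpow_mul hp0.le, hpq, Real.rpow_neg hp0.le, mul_inv, div_eq_mul_inv]
  have habs : |((c ^ n)⁻¹ : ℝ)| = (p ^ (1 / p) * q ^ (1 / q)) ^ n := by
    rw [hcA, inv_pow, inv_inv, abs_of_pos (pow_pos hA n)]
  rw [habs]
  have hsqrt : Real.sqrt Real.pi ^ n = Real.pi ^ ((n : ℝ) / 2) := by
    rw [Real.sqrt_eq_rpow, ← Real.rpow_natCast (Real.pi ^ ((1 : ℝ) / 2)) n,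
      ← Real.rpow_mul Real.pi_pos.le]
    norm_num
    rw [one_div, inv_mul_eq_div]
  have hpineg : Real.pi ^ (-(n : ℝ) / 2) = (Real.pi ^ ((n : ℝ) / 2))⁻¹ := by
    rw [neg_div, Real.rpow_neg Real.pi_pos.le]
  have hAneg : (p ^ (1 / p) * q ^ (1 / q)) ^ (-(n : ℝ))
      = ((p ^ (1 / p) * q ^ (1 / q)) ^ n)⁻¹ := by
    rw [Real.rpow_neg hA.le, Real.rpow_natCast]
  unfold Cpn
  rw [hAneg, hpineg, hsqrt]
  have hx : (0 : ℝ) < Real.pi ^ ((n : ℝ) / 2) := Real.rpow_pos_of_pos Real.pi_pos _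
  field_simp
end

section
/- With p > 1, q = p/(p-1), and G̃_p the normalized generalized Gaussian as above, the p-entropy satisfies H_p(G̃_p) = log( (p^{1/p} q^{1/q} e^{1/q})^n · π^{n/2} · Γ(n/q+1)/Γ(n/2+1) ). -/
/-!
`G̃_p ^ (p-1) = A exp (-b ‖x‖ ^ q)` with `A = C_{p,n}` and `b = (p-1)/p^q`, and its logarithm
`log A - b ‖x‖ ^ q` is affine in `‖x‖ ^ q`. In polar coordinates both `∫ exp (-b ‖x‖ ^ q)` and
`∫ ‖x‖ ^ q exp (-b ‖x‖ ^ q)` are Gamma integrals, and `Γ (s+1) = s Γ (s)` makes the second one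
`n / (q b)` times the first. Since `A ∫ exp (-b ‖x‖ ^ q) = 1` (here `(p^{1/p} q^{1/q}) ^ q = 1/b`
is where `q = p/(p-1)` enters), the entropy is `n/q - log A`.
-/

open MeasureTheory

open Module Real Set

lemma pow_sub_one_mul_rpow {n : ℕ} (hn : 0 < n) {y : ℝ} (hy : 0 < y) (s : ℝ) :
    y ^ (n - 1) * y ^ s = y ^ ((n : ℝ) - 1 + s) := by
  rw [rpow_add hy, ← rpow_natCast, Nat.cast_sub hn, Nat.cast_one]

section RadialExp

variable {E : Type*} [NormedAddCommGroup E] [NormedSpace ℝ E] [FiniteDimensional ℝ E]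
  [MeasurableSpace E] [BorelSpace E] [Nontrivial E] (μ : Measure E) [μ.IsAddHaarMeasure]
  {s q b : ℝ}

lemma integrable_norm_rpow_mul_exp_neg_mul_norm_rpow (hs : -(finrank ℝ E : ℝ) < s) (hq : 0 < q)
    (hb : 0 < b) : Integrable (fun x : E => ‖x‖ ^ s * exp (-b * ‖x‖ ^ q)) μ := by
  refine (integrable_fun_norm_addHaar μ (f := fun y => y ^ s * exp (-b * y ^ q))).2 ?_
  refine (integrableOn_rpow_mul_exp_neg_mul_rpow (s := (finrank ℝ E : ℝ) - 1 + s)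
    (by linarith) hq hb).congr_fun (fun y (hy : 0 < y) => ?_) measurableSet_Ioi
  rw [smul_eq_mul, ← mul_assoc, pow_sub_one_mul_rpow finrank_pos hy]

lemma integral_norm_rpow_mul_exp_neg_mul_norm_rpow (hs : -(finrank ℝ E : ℝ) < s) (hq : 0 < q)
    (hb : 0 < b) :
    ∫ x : E, ‖x‖ ^ s * exp (-b * ‖x‖ ^ q) ∂μ =
      μ.real (Metric.ball 0 1) * (finrank ℝ E / q) * b ^ (-(finrank ℝ E + s) / q) *
        Gamma ((finrank ℝ E + s) / q) := by
  have hradial : ∫ y in Ioi (0 : ℝ), y ^ (finrank ℝ E - 1) • (y ^ s * exp (-b * y ^ q)) =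
      ∫ y in Ioi (0 : ℝ), y ^ ((finrank ℝ E : ℝ) - 1 + s) * exp (-b * y ^ q) :=
    setIntegral_congr_fun measurableSet_Ioi fun y (hy : 0 < y) => by
      rw [smul_eq_mul, ← mul_assoc, pow_sub_one_mul_rpow finrank_pos hy]
  rw [integral_fun_norm_addHaar μ (fun y => y ^ s * exp (-b * y ^ q)), hradial,
    integral_rpow_mul_exp_neg_mul_rpow hq (by linarith) hb, nsmul_eq_mul, smul_eq_mul,
    show (finrank ℝ E : ℝ) - 1 + s + 1 = finrank ℝ E + s by ring]
  ring

lemma integral_exp_neg_mul_norm_rpow (hq : 0 < q) (hb : 0 < b) :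
    ∫ x : E, exp (-b * ‖x‖ ^ q) ∂μ =
      μ.real (Metric.ball 0 1) * Gamma (finrank ℝ E / q + 1) * b ^ (-(finrank ℝ E / q)) := by
  have hd : (0 : ℝ) < finrank ℝ E := Nat.cast_pos.2 finrank_pos
  have := integral_norm_rpow_mul_exp_neg_mul_norm_rpow μ (neg_neg_of_pos hd) hq hb
  simp only [rpow_zero, one_mul, add_zero] at this
  rw [this, Gamma_add_one (by positivity), neg_div]
  ring

lemma integral_norm_rpow_mul_exp_neg_mul_norm_rpow_self (hq : 0 < q) (hb : 0 < b) :
    ∫ x : E, ‖x‖ ^ q * exp (-b * ‖x‖ ^ q) ∂μ =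
      finrank ℝ E / (q * b) * ∫ x : E, exp (-b * ‖x‖ ^ q) ∂μ := by
  have hd : (0 : ℝ) < finrank ℝ E := Nat.cast_pos.2 finrank_pos
  rw [integral_norm_rpow_mul_exp_neg_mul_norm_rpow μ (by linarith) hq hb,
    integral_exp_neg_mul_norm_rpow μ hq hb,
    show -((finrank ℝ E : ℝ) + q) / q = -(finrank ℝ E / q) + -1 by field_simp; ring,
    rpow_add hb, rpow_neg_one]
  field_simp

lemma integral_mul_log_of_integral_exp_neg_mul_norm_rpow {A : ℝ} (hA : 0 < A) (hq : 0 < q)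
    (hb : 0 < b) (hnorm : A * ∫ x : E, exp (-b * ‖x‖ ^ q) ∂μ = 1) :
    ∫ x : E, A * exp (-b * ‖x‖ ^ q) * log (A * exp (-b * ‖x‖ ^ q)) ∂μ =
      log A - finrank ℝ E / q := by
  have hd : (0 : ℝ) < finrank ℝ E := Nat.cast_pos.2 finrank_pos
  have hexp := integrable_norm_rpow_mul_exp_neg_mul_norm_rpow μ (neg_neg_of_pos hd) hq hb
  simp only [rpow_zero, one_mul] at hexp
  have hmoment := integrable_norm_rpow_mul_exp_neg_mul_norm_rpow μ (by linarith) hq hb (s := q)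
  have hsplit : (fun x : E => A * exp (-b * ‖x‖ ^ q) * log (A * exp (-b * ‖x‖ ^ q))) =
      fun x => A * log A * exp (-b * ‖x‖ ^ q) - A * b * (‖x‖ ^ q * exp (-b * ‖x‖ ^ q)) := by
    ext x
    rw [log_mul hA.ne' (exp_ne_zero _), log_exp]
    ring
  rw [hsplit, integral_sub (hexp.const_mul _) (hmoment.const_mul _), integral_const_mul,
    integral_const_mul, integral_norm_rpow_mul_exp_neg_mul_norm_rpow_self μ hq hb]
  linear_combination (log A - finrank ℝ E / q) * hnorm
    - (A * (∫ x : E, exp (-b * ‖x‖ ^ q) ∂μ) * finrank ℝ E / q) * mul_inv_cancel₀ hb.ne'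

end RadialExp

lemma EuclideanSpace.volume_real_ball_zero_one {n : ℕ} (hn : 0 < n) :
    volume.real (Metric.ball (0 : EuclideanSpace ℝ (Fin n)) 1) =
      π ^ ((n : ℝ) / 2) / Gamma (n / 2 + 1) := by
  have : Nonempty (Fin n) := ⟨⟨0, hn⟩⟩
  rw [measureReal_def, EuclideanSpace.volume_ball, ENNReal.ofReal_one, one_pow, one_mul,
    ENNReal.toReal_ofReal (by positivity), Fintype.card_fin, sqrt_eq_rpow, ← rpow_natCast,
    ← rpow_mul pi_pos.le, one_div_mul_eq_div]

lemma Cpn_pos (n : ℕ) {p q : ℝ} (hp : 0 < p) (hq : 0 < q) : 0 < Cpn n p q := by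
  unfold Cpn
  have := Gamma_pos_of_pos (show 0 < (n : ℝ) / 2 + 1 by positivity)
  have := Gamma_pos_of_pos (show 0 < (n : ℝ) / q + 1 by positivity)
  positivity

lemma Gp_rpow_sub_one (n : ℕ) {p q : ℝ} (hp : 1 < p) (hq : 0 < q)
    (x : EuclideanSpace ℝ (Fin n)) :
    Gp n p q x ^ (p - 1) = Cpn n p q * exp (-((p - 1) / p ^ q) * ‖x‖ ^ q) := by
  rw [Gp, ← rpow_mul (mul_pos (Cpn_pos n (by linarith) hq) (exp_pos _)).le,
    one_div_mul_cancel (sub_pos.2 hp).ne', rpow_one]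

lemma conj_scale_rpow_eq {p q : ℝ} (hp : 1 < p) (hq : q = p / (p - 1)) :
    (p ^ (1 / p) * q ^ (1 / q)) ^ q = p ^ q / (p - 1) := by
  have hp0 : 0 < p := by linarith
  have hp1 : 0 < p - 1 := sub_pos.2 hp
  have hq0 : 0 < q := hq ▸ div_pos hp0 hp1
  rw [mul_rpow (by positivity) (by positivity), ← rpow_mul hp0.le, ← rpow_mul hq0.le,
    one_div_mul_cancel hq0.ne', rpow_one,
    show 1 / p * q = q - 1 by rw [hq]; field_simp; ring, rpow_sub_one hp0.ne']
  nth_rw 2 [hq]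
  field_simp

lemma Cpn_mul_integral_exp_neg_mul_norm_rpow {n : ℕ} (hn : 0 < n) {p q : ℝ} (hp : 1 < p)
    (hq : q = p / (p - 1)) :
    Cpn n p q * ∫ x : EuclideanSpace ℝ (Fin n), exp (-((p - 1) / p ^ q) * ‖x‖ ^ q) = 1 := by
  have hp0 : 0 < p := by linarith
  have hp1 : 0 < p - 1 := sub_pos.2 hp
  have hq0 : 0 < q := hq ▸ div_pos hp0 hp1
  have : Nonempty (Fin n) := ⟨⟨0, hn⟩⟩
  have hscale : ((p - 1) / p ^ q) ^ (-((n : ℝ) / q)) = (p ^ (1 / p) * q ^ (1 / q)) ^ (n : ℝ) := by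
    rw [rpow_neg (by positivity), ← inv_rpow (by positivity), inv_div, ← conj_scale_rpow_eq hp hq,
      ← rpow_mul (by positivity), mul_div_cancel₀ _ hq0.ne']
  rw [integral_exp_neg_mul_norm_rpow _ hq0 (by positivity), finrank_euclideanSpace_fin,
    EuclideanSpace.volume_real_ball_zero_one hn, hscale, Cpn, neg_div,
    rpow_neg (by positivity), rpow_neg pi_pos.le]
  have := Gamma_pos_of_pos (show 0 < (n : ℝ) / 2 + 1 by positivity)
  have := Gamma_pos_of_pos (show 0 < (n : ℝ) / q + 1 by positivity)
  field_simp

lemma entropy_value_eq_exp_mul_inv_Cpn {n : ℕ} {p q : ℝ} (hp : 0 < p) (hq : 0 < q) :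
    (p ^ (1 / p) * q ^ (1 / q) * exp (1 / q)) ^ (n : ℝ) * π ^ ((n : ℝ) / 2) *
        (Gamma ((n : ℝ) / q + 1) / Gamma ((n : ℝ) / 2 + 1)) = exp (n / q) * (Cpn n p q)⁻¹ := by
  rw [mul_rpow (by positivity) (exp_pos _).le, ← exp_mul, one_div_mul_eq_div, Cpn, neg_div,
    rpow_neg (by positivity), rpow_neg pi_pos.le]
  have := Gamma_pos_of_pos (show 0 < (n : ℝ) / 2 + 1 by positivity)
  have := Gamma_pos_of_pos (show 0 < (n : ℝ) / q + 1 by positivity)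
  field_simp

theorem pEntropy_Gp (n : ℕ) (hn : 1 ≤ n) (p q : ℝ) (hp : 1 < p)
    (hq : q = p / (p - 1)) :
    (-∫ x, Gp n p q x ^ (p - 1) * Real.log (Gp n p q x ^ (p - 1))) =
      Real.log ((p ^ (1 / p) * q ^ (1 / q) * Real.exp (1 / q)) ^ (n : ℝ) *
        Real.pi ^ ((n : ℝ) / 2) *
        (Real.Gamma ((n : ℝ) / q + 1) / Real.Gamma ((n : ℝ) / 2 + 1))) := by
  have hp0 : 0 < p := by linarith
  have hq0 : 0 < q := hq ▸ div_pos hp0 (sub_pos.2 hp)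
  have : Nonempty (Fin n) := ⟨⟨0, hn⟩⟩
  have hA := Cpn_pos n hp0 hq0
  have hb : 0 < (p - 1) / p ^ q := div_pos (sub_pos.2 hp) (rpow_pos_of_pos hp0 q)
  simp_rw [Gp_rpow_sub_one n hp hq0]
  rw [integral_mul_log_of_integral_exp_neg_mul_norm_rpow _ hA hq0 hb
      (Cpn_mul_integral_exp_neg_mul_norm_rpow hn hp hq),
    entropy_value_eq_exp_mul_inv_Cpn hp0 hq0, log_mul (exp_ne_zero _) (inv_ne_zero hA.ne'),
    log_exp, log_inv, finrank_euclideanSpace_fin]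
  ring
end
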